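/- Let λ : M_{4n}(K) → K be a linear functional such that for all 1 ≤ i,j,k,l ≤ n: λ(x̄_{2i,2j}x̄_{2k,2l} − x̄_{2k,2l}x̄_{2i,2j}) = 0, λ(x̄_{2i-1,2j-1}x̄_{2k-1,2l-1} − x̄_{2k-1,2l-1}x̄_{2i-1,2j-1}) = 0, and λ(β̄_{2i,2j-1}γ̄_{2k,2l-1} + γ̄_{2k,2l-1}β̄_{2i,2j-1}) = 0. Then λ(x̄_{2j,2i} − x̄_{2j-1,2i-1}) = 0 for all 1 ≤ i,j ≤ n. (Since the elements x̄_{2j,2i} − x̄_{2j-1,2i-1} together with the odd generators of g₀ span the image of the inner structure algebra istr(JPe(n)) inside pe(2n), this says that the only character on istr(JPe(n)) is the trivial character λ = 0.) -/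
import Mathlib


open Matrix

/-- Elementary matrix with 1-based indices: entry `(a, b)` is `1`, all other entries `0`. -/
def Emat (K : Type*) [Field K] (N a b : ℕ) : Matrix (Fin N) (Fin N) K :=
  Matrix.of fun p q => if (p : ℕ) + 1 = a ∧ (q : ℕ) + 1 = b then 1 else 0

/-- The even generators `x̄_{ij} = E_{ij} - E_{j+2n,i+2n}` of the periplectic
Lie superalgebra `pe(2n) ⊂ M_{4n}(K)`. -/
def xP (K : Type*) [Field K] (n i j : ℕ) : Matrix (Fin (4 * n)) (Fin (4 * n)) K :=
  Emat K (4 * n) i j - Emat K (4 * n) (j + 2 * n) (i + 2 * n)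

/-- The odd generators `β̄_{ij} = E_{i,j+2n} + E_{j,i+2n}` of `pe(2n)`. -/
def bP (K : Type*) [Field K] (n i j : ℕ) : Matrix (Fin (4 * n)) (Fin (4 * n)) K :=
  Emat K (4 * n) i (j + 2 * n) + Emat K (4 * n) j (i + 2 * n)

/-- The odd generators `γ̄_{ij} = E_{i+2n,j} - E_{j+2n,i}` of `pe(2n)`. -/
def gP (K : Type*) [Field K] (n i j : ℕ) : Matrix (Fin (4 * n)) (Fin (4 * n)) K :=
  Emat K (4 * n) (i + 2 * n) j - Emat K (4 * n) (j + 2 * n) i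

lemma Emat_mul (K : Type*) [Field K] (N a b c d : ℕ) :
    Emat K N a b * Emat K N c d =
      if b = c ∧ 1 ≤ b ∧ b ≤ N then Emat K N a d else 0 := by
  ext p q
  simp only [Emat, Matrix.mul_apply, Matrix.of_apply]
  by_cases h : b = c ∧ 1 ≤ b ∧ b ≤ N
  · obtain ⟨rfl, hb1, hbN⟩ := h
    rw [if_pos ⟨rfl, hb1, hbN⟩]
    rw [Finset.sum_eq_single (⟨b - 1, by omega⟩ : Fin N)]
    · simp only [Matrix.of_apply]
      have : (b : ℕ) - 1 + 1 = b := by omega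
      split_ifs <;> simp_all <;> omega
    · intro r _ hr
      have : (r : ℕ) + 1 ≠ b := by
        intro hc
        apply hr
        apply Fin.ext
        simp
        omega
      split_ifs <;> simp_all
    · intro hc
      exact absurd (Finset.mem_univ _) hc
  · rw [if_neg h]
    simp only [Matrix.zero_apply]
    apply Finset.sum_eq_zero
    intro r _
    split_ifs with h1 h2
    · exact absurd ⟨h1.2.symm.trans h2.1, by omega, by omega⟩ h
    all_goals simp

lemma keyM (K : Type*) [Field K] (n i j k l : ℕ) (hi : 1 ≤ i) (hi' : i ≤ n)
    (hj : 1 ≤ j) (hj' : j ≤ n) (hk : 1 ≤ k) (hk' : k ≤ n) (hl : 1 ≤ l) (hl' : l ≤ n) :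
    bP K n (2 * i) (2 * j - 1) * gP K n (2 * k) (2 * l - 1)
      + gP K n (2 * k) (2 * l - 1) * bP K n (2 * i) (2 * j - 1)
    = (if j = l then -(xP K n (2 * i) (2 * k)) else 0)
      + (if i = k then xP K n (2 * j - 1) (2 * l - 1) else 0) := by
  have e1 : Emat K (4*n) (2*i) (2*j-1+2*n) * Emat K (4*n) (2*k+2*n) (2*l-1) = 0 := by
    rw [Emat_mul, if_neg]; omega
  have e2 : Emat K (4*n) (2*i) (2*j-1+2*n) * Emat K (4*n) (2*l-1+2*n) (2*k)
      = if j = l then Emat K (4*n) (2*i) (2*k) else 0 := by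
    by_cases h : j = l
    · subst h; rw [Emat_mul, if_pos ⟨rfl, by omega, by omega⟩, if_pos rfl]
    · rw [Emat_mul, if_neg (by omega), if_neg h]
  have e3 : Emat K (4*n) (2*j-1) (2*i+2*n) * Emat K (4*n) (2*k+2*n) (2*l-1)
      = if i = k then Emat K (4*n) (2*j-1) (2*l-1) else 0 := by
    by_cases h : i = k
    · subst h; rw [Emat_mul, if_pos ⟨rfl, by omega, by omega⟩, if_pos rfl]
    · rw [Emat_mul, if_neg (by omega), if_neg h]
  have e4 : Emat K (4*n) (2*j-1) (2*i+2*n) * Emat K (4*n) (2*l-1+2*n) (2*k) = 0 := by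
    rw [Emat_mul, if_neg]; omega
  have e5 : Emat K (4*n) (2*k+2*n) (2*l-1) * Emat K (4*n) (2*i) (2*j-1+2*n) = 0 := by
    rw [Emat_mul, if_neg]; omega
  have e6 : Emat K (4*n) (2*k+2*n) (2*l-1) * Emat K (4*n) (2*j-1) (2*i+2*n)
      = if j = l then Emat K (4*n) (2*k+2*n) (2*i+2*n) else 0 := by
    by_cases h : j = l
    · subst h; rw [Emat_mul, if_pos ⟨rfl, by omega, by omega⟩, if_pos rfl]
    · rw [Emat_mul, if_neg (by omega), if_neg h]
  have e7 : Emat K (4*n) (2*l-1+2*n) (2*k) * Emat K (4*n) (2*i) (2*j-1+2*n)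
      = if i = k then Emat K (4*n) (2*l-1+2*n) (2*j-1+2*n) else 0 := by
    by_cases h : i = k
    · subst h; rw [Emat_mul, if_pos ⟨rfl, by omega, by omega⟩, if_pos rfl]
    · rw [Emat_mul, if_neg (by omega), if_neg h]
  have e8 : Emat K (4*n) (2*l-1+2*n) (2*k) * Emat K (4*n) (2*j-1) (2*i+2*n) = 0 := by
    rw [Emat_mul, if_neg]; omega
  simp only [bP, gP, xP, add_mul, mul_add, mul_sub, sub_mul, e1, e2, e3, e4, e5, e6, e7, e8]
  split_ifs <;> abel

/-- a character on the zero graded piece `g₀` of `pe(2n)` vanishes on the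
elements `x̄_{2j,2i} − x̄_{2j-1,2i-1}`, i.e. the only character on `istr(JPe(n))`
is the trivial one. -/
theorem pe_character_istr_trivial (K : Type*) [Field K] [CharZero K] (n : ℕ) (hn : 2 ≤ n)
    (lam : Matrix (Fin (4 * n)) (Fin (4 * n)) K →ₗ[K] K)
    (hxx : ∀ i j k l : ℕ, 1 ≤ i → i ≤ n → 1 ≤ j → j ≤ n → 1 ≤ k → k ≤ n → 1 ≤ l → l ≤ n →
      lam (xP K n (2 * i) (2 * j) * xP K n (2 * k) (2 * l)
        - xP K n (2 * k) (2 * l) * xP K n (2 * i) (2 * j)) = 0)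
    (hxx' : ∀ i j k l : ℕ, 1 ≤ i → i ≤ n → 1 ≤ j → j ≤ n → 1 ≤ k → k ≤ n → 1 ≤ l → l ≤ n →
      lam (xP K n (2 * i - 1) (2 * j - 1) * xP K n (2 * k - 1) (2 * l - 1)
        - xP K n (2 * k - 1) (2 * l - 1) * xP K n (2 * i - 1) (2 * j - 1)) = 0)
    (hbg : ∀ i j k l : ℕ, 1 ≤ i → i ≤ n → 1 ≤ j → j ≤ n → 1 ≤ k → k ≤ n → 1 ≤ l → l ≤ n →
      lam (bP K n (2 * i) (2 * j - 1) * gP K n (2 * k) (2 * l - 1)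
        + gP K n (2 * k) (2 * l - 1) * bP K n (2 * i) (2 * j - 1)) = 0) :
    ∀ i j : ℕ, 1 ≤ i → i ≤ n → 1 ≤ j → j ≤ n →
      lam (xP K n (2 * j) (2 * i) - xP K n (2 * j - 1) (2 * i - 1)) = 0 := by
  intro i j hi1 hi2 hj1 hj2
  have hn1 : 1 ≤ n := by omega
  by_cases hji : j = i
  · subst hji
    have h3 := hbg j j j j hj1 hj2 hj1 hj2 hj1 hj2 hj1 hj2
    rw [keyM K n j j j j hj1 hj2 hj1 hj2 hj1 hj2 hj1 hj2, if_pos rfl, if_pos rfl] at h3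
    have e : xP K n (2 * j) (2 * j) - xP K n (2 * j - 1) (2 * j - 1)
        = -(-(xP K n (2 * j) (2 * j)) + xP K n (2 * j - 1) (2 * j - 1)) := by abel
    rw [e, map_neg, h3, neg_zero]
  · have h1 := hbg j 1 i 1 hj1 hj2 le_rfl hn1 hi1 hi2 le_rfl hn1
    rw [keyM K n j 1 i 1 hj1 hj2 le_rfl hn1 hi1 hi2 le_rfl hn1,
      if_pos rfl, if_neg hji, add_zero, map_neg, neg_eq_zero] at h1
    have h2 := hbg 1 j 1 i le_rfl hn1 hj1 hj2 le_rfl hn1 hi1 hi2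
    rw [keyM K n 1 j 1 i le_rfl hn1 hj1 hj2 le_rfl hn1 hi1 hi2,
      if_neg hji, if_pos rfl, zero_add] at h2
    rw [map_sub, h1, h2, sub_zero]
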